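/- Define ω(x) = x + (1/2a)·((H(Z^0(x)) − H̄^−) − (I(Z^0(x)) − Ī^+)). Then ω is a Lipschitz, strictly increasing bijection of ℝ with a.e. derivative ω'(x) = (μ̄^0_+ − λ̄^0_−)/(μ^0(x) − λ^0(x)), which is bounded below by a positive constant, and X(t, Z^0(x)) − ((λ̄^0_− + μ̄^0_+)/2)·t → ω(x) as t → +∞, pointwise on ℝ and uniformly on every compact subset of ℝ; moreover, letting θ = ω^{-1} (which is Lipschitz and strictly increasing), θ(X(t, Z^0(x)) − ((λ̄^0_− + μ̄^0_+)/2)·t) → x as t → +∞, pointwise on ℝ and uniformly on every compact subset of ℝ. -/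

import Mathlib

/-!
`Z⁰` is the primitive of the density `2a / (μ⁰ - λ⁰)`, which is pinched between two positive
constants, so `Z⁰` has two-sided slope bounds. The pushforward of `2a / (μ⁰ - λ⁰) dx` under `Z⁰`
is Lebesgue measure, so the change of variables `ξ = Z⁰(y)` turns `(μ⁰ - λ⁰) ∘ X⁰` into the
constant `2a`: `∫₀^{Z⁰ x} (μ⁰ - λ⁰)(X⁰ ξ) dξ = 2a x`. Splitting the constants `λ̄`, `μ̄` off `H`
and `I` then shows that `ω = (μ̄ - λ̄)/(2a) · Z⁰ + const` and
`X(t, Z⁰ x) - (λ̄ + μ̄) t / 2 = ω x + ((I(Z⁰ x + a t) - Ī) - (H(Z⁰ x - a t) - H̄)) / (2a)`.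
So `ω` is bi-Lipschitz with derivative `(μ̄ - λ̄)/(μ⁰ - λ⁰)` a.e., and the remainder tends to `0`
uniformly on compact sets, where `Z⁰` is bounded; the Lipschitz inverse `θ` transfers this.
-/

open MeasureTheory Filter Set Topology Bornology

theorem locallyIntegrable_of_isBounded_range {X E : Type*} [TopologicalSpace X]
    [MeasurableSpace X] [NormedAddCommGroup E] {μ : Measure X} [IsLocallyFiniteMeasure μ]
    {f : X → E} (hf : AEStronglyMeasurable f μ) (hb : IsBounded (range f)) :
    LocallyIntegrable f μ := fun x => by
  obtain ⟨C, hC⟩ := isBounded_iff_forall_norm_le.1 hb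
  obtain ⟨s, hs, hμs⟩ := μ.finiteAt_nhds x
  exact ⟨s, hs, Measure.integrableOn_of_bounded hμs.ne hf
    (ae_of_all _ fun y => hC _ (mem_range_self y))⟩

theorem MeasureTheory.LocallyIntegrable.intervalIntegrable {E : Type*} [NormedAddCommGroup E]
    {μ : Measure ℝ} {f : ℝ → E} (hf : LocallyIntegrable f μ) (u v : ℝ) :
    IntervalIntegrable f μ u v :=
  (hf.integrableOn_isCompact isCompact_uIcc).intervalIntegrable

theorem integral_eq_integral_sub_const_add {φ : ℝ → ℝ} (hφ : LocallyIntegrable φ) (b p z : ℝ) :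
    ∫ t in (0:ℝ)..z, φ t =
      (∫ t in p..z, (φ t - b)) - (∫ t in p..0, (φ t - b)) + b * z := by
  have hφb : LocallyIntegrable fun t => φ t - b := hφ.sub (locallyIntegrable_const b)
  rw [intervalIntegral.integral_interval_sub_left (hφb.intervalIntegrable p z)
      (hφb.intervalIntegrable p 0),
    intervalIntegral.integral_sub (hφ.intervalIntegrable 0 z) intervalIntegrable_const,
    intervalIntegral.integral_const, smul_eq_mul]
  ring

theorem mem_Icc_csInf_csSup_of_tendsto {α : Type*} {l : Filter α} [l.NeBot] {f : α → ℝ} {b : ℝ}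
    (hf : Tendsto f l (𝓝 b)) (h₁ : BddBelow (range f)) (h₂ : BddAbove (range f)) :
    b ∈ Icc (sInf (range f)) (sSup (range f)) :=
  isClosed_Icc.mem_of_tendsto hf <| Eventually.of_forall fun x =>
    ⟨csInf_le h₁ (mem_range_self x), le_csSup h₂ (mem_range_self x)⟩

theorem strictMono_invFun {α β : Type*} [LinearOrder α] [Preorder β] [Nonempty α] {f : α → β}
    (hf : StrictMono f) (hs : Function.Surjective f) : StrictMono (Function.invFun f) :=
  fun u v huv => hf.lt_iff_lt.1 <| by
    rwa [Function.rightInverse_invFun hs u, Function.rightInverse_invFun hs v]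

theorem monotone_of_leftInverse {α β : Type*} [LinearOrder α] [Preorder β] {f : α → β}
    {f' : β → α} (hf : StrictMono f) (hs : Function.Surjective f)
    (hf' : Function.LeftInverse f' f) : Monotone f' := fun u v huv => by
  obtain ⟨p, rfl⟩ := hs u
  obtain ⟨q, rfl⟩ := hs v
  rwa [hf' p, hf' q, ← hf.le_iff_le]

def HasSlopeBounds (f : ℝ → ℝ) (m M : ℝ) : Prop :=
  ∀ p q, p ≤ q → m * (q - p) ≤ f q - f p ∧ f q - f p ≤ M * (q - p)

namespace HasSlopeBounds

variable {f : ℝ → ℝ} {m M : ℝ}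

theorem strictMono (h : HasSlopeBounds f m M) (hm : 0 < m) : StrictMono f := fun p q hpq => by
  nlinarith [(h p q hpq.le).1]

theorem lipschitzWith (h : HasSlopeBounds f m M) (hm : 0 ≤ m) : LipschitzWith M.toNNReal f := by
  refine LipschitzWith.of_le_add_mul' M fun p q => ?_
  rcases le_total p q with hpq | hqp
  · rw [dist_comm, Real.dist_eq, abs_of_nonneg (sub_nonneg.2 hpq)]
    nlinarith [h p q hpq]
  · rw [Real.dist_eq, abs_of_nonneg (sub_nonneg.2 hqp)]
    linarith [(h q p hqp).2]

theorem antilipschitzWith (h : HasSlopeBounds f m M) (hm : 0 < m) :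
    AntilipschitzWith m⁻¹.toNNReal f := by
  refine AntilipschitzWith.of_le_mul_dist fun p q => ?_
  rw [Real.coe_toNNReal _ (inv_nonneg.2 hm.le), Real.dist_eq, Real.dist_eq, le_inv_mul_iff₀ hm]
  rcases le_total p q with hpq | hqp
  · rw [abs_sub_comm, abs_sub_comm (f p), abs_of_nonneg (sub_nonneg.2 hpq)]
    exact (h p q hpq).1.trans (le_abs_self _)
  · rw [abs_of_nonneg (sub_nonneg.2 hqp)]
    exact (h q p hqp).1.trans (le_abs_self _)

theorem surjective (h : HasSlopeBounds f m M) (hm : 0 < m) : Function.Surjective f := by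
  refine (h.lipschitzWith hm.le).continuous.surjective ?_ ?_
  · refine tendsto_atTop_mono' _ ?_
      (tendsto_atTop_add_const_left _ (f 0) (tendsto_id.const_mul_atTop hm))
    filter_upwards [eventually_ge_atTop 0] with q hq
    show f 0 + m * q ≤ f q
    linarith [(h 0 q hq).1]
  · refine tendsto_atBot_mono' _ ?_
      (tendsto_atBot_add_const_left _ (f 0) (tendsto_id.const_mul_atBot hm))
    filter_upwards [eventually_le_atBot 0] with p hp
    show f p ≤ f 0 + m * p
    linarith [(h p 0 hp).1]

theorem const_mul_add (h : HasSlopeBounds f m M) {c : ℝ} (hc : 0 ≤ c) (d : ℝ) :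
    HasSlopeBounds (fun x => c * f x + d) (c * m) (c * M) := fun p q hpq => by
  obtain ⟨hlow, hup⟩ := h p q hpq
  constructor <;> nlinarith

theorem lipschitzWith_invFun (h : HasSlopeBounds f m M) (hm : 0 < m) :
    LipschitzWith m⁻¹.toNNReal (Function.invFun f) :=
  (h.antilipschitzWith hm).to_rightInverse (Function.rightInverse_invFun (h.surjective hm))

end HasSlopeBounds

noncomputable def primitive (g : ℝ → ℝ) (x : ℝ) : ℝ := ∫ t in (0:ℝ)..x, g t

section Primitive

variable {g : ℝ → ℝ}

theorem primitive_zero : primitive g 0 = 0 := intervalIntegral.integral_same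

theorem primitive_sub (hg : LocallyIntegrable g) (p q : ℝ) :
    primitive g q - primitive g p = ∫ t in p..q, g t :=
  intervalIntegral.integral_interval_sub_left (hg.intervalIntegrable 0 q)
    (hg.intervalIntegrable 0 p)

theorem continuous_primitive (hg : LocallyIntegrable g) : Continuous (primitive g) :=
  intervalIntegral.continuous_primitive hg.intervalIntegrable 0

theorem ae_hasDerivAt_primitive (hg : LocallyIntegrable g) :
    ∀ᵐ x, HasDerivAt (primitive g) (g x) x := by
  filter_upwards [LocallyIntegrable.ae_hasDerivAt_integral hg] with x hx using hx 0

theorem hasSlopeBounds_primitive (hg : LocallyIntegrable g) {m M : ℝ} (hm : ∀ x, m ≤ g x)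
    (hM : ∀ x, g x ≤ M) : HasSlopeBounds (primitive g) m M := fun p q hpq => by
  rw [primitive_sub hg, mul_comm m, mul_comm M, ← smul_eq_mul, ← smul_eq_mul,
    ← intervalIntegral.integral_const, ← intervalIntegral.integral_const]
  exact ⟨intervalIntegral.integral_mono_on hpq intervalIntegrable_const
      (hg.intervalIntegrable p q) fun x _ => hm x,
    intervalIntegral.integral_mono_on hpq (hg.intervalIntegrable p q)
      intervalIntegrable_const fun x _ => hM x⟩

variable (hg : LocallyIntegrable g) (hg0 : ∀ x, 0 ≤ g x) (hmono : StrictMono (primitive g))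
  (hsurj : Function.Surjective (primitive g))
include hg hg0 hmono hsurj

theorem map_withDensity_primitive :
    (volume.withDensity fun x => ENNReal.ofReal (g x)).map (primitive g) = volume := by
  set e := hmono.orderIsoOfSurjective _ hsurj
  refine (Measure.ext_of_Ioc _ _ fun p q hpq => ?_).symm
  have hpre : primitive g ⁻¹' Ioc p q = Ioc (e.symm p) (e.symm q) := e.preimage_Ioc p q
  rw [Measure.map_apply hmono.monotone.measurable measurableSet_Ioc, hpre,
    withDensity_apply _ measurableSet_Ioc, ← ofReal_integral_eq_lintegral_ofReal
      (hg.intervalIntegrable _ _).1 (ae_of_all _ fun x => hg0 x),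
    ← intervalIntegral.integral_of_le (e.symm.monotone hpq.le), ← primitive_sub hg,
    hmono.orderIsoOfSurjective_self_symm_apply, hmono.orderIsoOfSurjective_self_symm_apply,
    Real.volume_Ioc]

theorem setIntegral_Ioc_primitive {h : ℝ → ℝ} (hh : AEStronglyMeasurable h volume) (p q : ℝ) :
    ∫ y in Ioc (primitive g p) (primitive g q), h y =
      ∫ x in Ioc p q, g x * h (primitive g x) := by
  have hmap := map_withDensity_primitive hg hg0 hmono hsurj
  have hpre : primitive g ⁻¹' Ioc (primitive g p) (primitive g q) = Ioc p q := by
    ext x; simp only [mem_preimage, mem_Ioc, hmono.lt_iff_lt, hmono.le_iff_le]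
  conv_lhs => rw [← hmap]
  rw [setIntegral_map measurableSet_Ioc (by rwa [hmap]) hmono.monotone.measurable.aemeasurable,
    hpre, setIntegral_withDensity_eq_setIntegral_toReal_smul₀
      hg.aestronglyMeasurable.aemeasurable.ennreal_ofReal.restrict
      (ae_of_all _ fun _ => ENNReal.ofReal_lt_top) _ measurableSet_Ioc]
  simp only [ENNReal.toReal_ofReal (hg0 _), smul_eq_mul]

theorem integral_comp_leftInverse_primitive {Y : ℝ → ℝ}
    (hY : Function.LeftInverse Y (primitive g)) {h : ℝ → ℝ} (hh : Measurable h) (p q : ℝ) :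
    ∫ y in primitive g p..primitive g q, h (Y y) = ∫ x in p..q, g x * h x := by
  have hhY : AEStronglyMeasurable (fun y => h (Y y)) volume :=
    (hh.comp (monotone_of_leftInverse hmono hsurj hY).measurable).aestronglyMeasurable
  rcases le_total p q with hpq | hqp
  · rw [intervalIntegral.integral_of_le (hmono.monotone hpq), intervalIntegral.integral_of_le hpq,
      setIntegral_Ioc_primitive hg hg0 hmono hsurj hhY]
    simp only [hY _]
  · rw [intervalIntegral.integral_of_ge (hmono.monotone hqp), intervalIntegral.integral_of_ge hqp,
      setIntegral_Ioc_primitive hg hg0 hmono hsurj hhY]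
    simp only [hY _]

end Primitive

theorem tendsto_add_atTop_prod_principal {ι α : Type*} {l : Filter ι} {s : Set α} {u : α → ℝ}
    (hu : BddBelow (u '' s)) {v : ι → ℝ} (hv : Tendsto v l atTop) :
    Tendsto (fun q : ι × α => u q.2 + v q.1) (l ×ˢ 𝓟 s) atTop := by
  obtain ⟨b, hb⟩ := hu
  exact tendsto_atTop_add_left_of_le' _ b (eventually_prod_principal_iff.2 <|
    Eventually.of_forall fun _ x hx => hb (mem_image_of_mem u hx)) (hv.comp tendsto_fst)

theorem tendsto_sub_atBot_prod_principal {ι α : Type*} {l : Filter ι} {s : Set α} {u : α → ℝ}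
    (hu : BddAbove (u '' s)) {v : ι → ℝ} (hv : Tendsto v l atTop) :
    Tendsto (fun q : ι × α => u q.2 - v q.1) (l ×ˢ 𝓟 s) atBot := by
  obtain ⟨b, hb⟩ := hu
  have hneg : BddBelow ((fun x => -u x) '' s) :=
    ⟨-b, by rintro _ ⟨x, hx, rfl⟩; exact neg_le_neg (hb (mem_image_of_mem u hx))⟩
  refine (tendsto_neg_atTop_atBot.comp (tendsto_add_atTop_prod_principal hneg hv)).congr
    fun q => ?_
  simp only [Function.comp_apply]
  ring

theorem tendsto_shift_remainder {α : Type*} {H I : ℝ → ℝ} {Hbar Ibar a : ℝ}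
    (hH : Tendsto H atBot (𝓝 Hbar)) (hI : Tendsto I atTop (𝓝 Ibar)) (ha : 0 < a)
    {u : α → ℝ} {s : Set α} (hu : IsBounded (u '' s)) :
    Tendsto (fun q : ℝ × α => (I (u q.2 + a * q.1) - Ibar) - (H (u q.2 - a * q.1) - Hbar))
      (atTop ×ˢ 𝓟 s) (𝓝 0) := by
  have hat : Tendsto (fun t : ℝ => a * t) atTop atTop := tendsto_id.const_mul_atTop ha
  obtain ⟨hbelow, habove⟩ := isBounded_iff_bddBelow_bddAbove.1 hu
  have hI' := hI.comp (tendsto_add_atTop_prod_principal hbelow hat)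
  have hH' := hH.comp (tendsto_sub_atBot_prod_principal habove hat)
  simpa using (hI'.sub_const Ibar).sub (hH'.sub_const Hbar)

theorem TendstoUniformlyOn.comp_leftInverse {ι α β : Type*} [UniformSpace α] [UniformSpace β]
    {l : Filter ι} {s : Set α} {F : ι → α → β} {f : α → β} {θ : β → α}
    (h : TendstoUniformlyOn F f l s) (hθ : UniformContinuous θ) (hθf : Function.LeftInverse θ f) :
    TendstoUniformlyOn (fun t x => θ (F t x)) id l s :=
  (hθ.comp_tendstoUniformlyOn h).congr_right fun x _ => hθf x

theorem tendstoUniformlyOn_add_of_tendsto_zero {ι α G : Type*} [SeminormedAddCommGroup G]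
    {l : Filter ι} {s : Set α} {f : α → G} {E : ι → α → G}
    (hE : Tendsto (fun q : ι × α => E q.1 q.2) (l ×ˢ 𝓟 s) (𝓝 0)) :
    TendstoUniformlyOn (fun t x => f x + E t x) f l s := by
  refine Metric.tendstoUniformlyOn_iff.2 fun ε hε => ?_
  filter_upwards [eventually_prod_principal_iff.1 (Metric.tendsto_nhds.1 hE ε hε)] with t ht x hx
  simpa [dist_self_add_right] using ht x hx

theorem exists_gap_bounds {α : Type*} {lam0 mu0 : α → ℝ} (hl₁ : BddBelow (range lam0))
    (hl₂ : BddAbove (range lam0)) (hm₁ : BddBelow (range mu0)) (hm₂ : BddAbove (range mu0))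
    (hsep : sSup (range lam0) < sInf (range mu0)) {l l' : Filter α} [l.NeBot] [l'.NeBot]
    {lbar mbar : ℝ} (hl : Tendsto lam0 l (𝓝 lbar)) (hm : Tendsto mu0 l' (𝓝 mbar)) :
    ∃ c C : ℝ, 0 < c ∧ (∀ x, c ≤ mu0 x - lam0 x ∧ mu0 x - lam0 x ≤ C) ∧ c ≤ mbar - lbar := by
  obtain ⟨-, hlbar⟩ := mem_Icc_csInf_csSup_of_tendsto hl hl₁ hl₂
  obtain ⟨hmbar, -⟩ := mem_Icc_csInf_csSup_of_tendsto hm hm₁ hm₂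
  refine ⟨sInf (range mu0) - sSup (range lam0), sSup (range mu0) - sInf (range lam0),
    sub_pos.2 hsep, fun x => ⟨?_, ?_⟩, by linarith⟩
  · linarith [csInf_le hm₁ (mem_range_self x), le_csSup hl₂ (mem_range_self x)]
  · linarith [le_csSup hm₂ (mem_range_self x), csInf_le hl₁ (mem_range_self x)]

theorem lagrangian_identities {a lbar mbar Hbar Ibar : ℝ} (ha : a ≠ 0)
    {Λ M H I Z0 ω : ℝ → ℝ} {X : ℝ → ℝ → ℝ}
    (hΛ : ∀ z, Λ z = H z - H 0 + lbar * z) (hM : ∀ z, M z = I z - I 0 + mbar * z)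
    (hkey : ∀ x, M (Z0 x) - Λ (Z0 x) = 2 * a * x)
    (hX : ∀ t z, X t z = (1 / (2 * a)) * M (z + a * t) - (1 / (2 * a)) * Λ (z - a * t))
    (hω : ∀ x, ω x = x + (1 / (2 * a)) * ((H (Z0 x) - Hbar) - (I (Z0 x) - Ibar))) :
    (∀ x, ω x = (mbar - lbar) / (2 * a) * Z0 x + (H 0 - I 0 + Ibar - Hbar) / (2 * a)) ∧
    ∀ t x, X t (Z0 x) - ((lbar + mbar) / 2) * t =
      ω x + (1 / (2 * a)) * ((I (Z0 x + a * t) - Ibar) - (H (Z0 x - a * t) - Hbar)) := by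
  have hω' : ∀ x, ω x = (mbar - lbar) / (2 * a) * Z0 x + (H 0 - I 0 + Ibar - Hbar) / (2 * a) :=
    fun x => by
      rw [hω]
      field_simp
      linear_combination hM (Z0 x) - hΛ (Z0 x) - hkey x
  refine ⟨hω', fun t x => ?_⟩
  rw [hX, hω', hΛ, hM]
  field_simp
  ring

theorem locallyIntegrable_and_hasSlopeBounds_primitive_of_gap {a : ℝ} (ha : 0 < a)
    {lam0 mu0 : ℝ → ℝ} (hlm : Measurable lam0) (hmm : Measurable mu0) {c0 C0 : ℝ} (hc0 : 0 < c0)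
    (hgap : ∀ x, c0 ≤ mu0 x - lam0 x ∧ mu0 x - lam0 x ≤ C0) :
    LocallyIntegrable (fun x => 2 * a / (mu0 x - lam0 x)) ∧
      HasSlopeBounds (primitive fun x => 2 * a / (mu0 x - lam0 x)) (2 * a / C0) (2 * a / c0) := by
  have hlow : ∀ x, 2 * a / C0 ≤ 2 * a / (mu0 x - lam0 x) := fun x =>
    div_le_div_of_nonneg_left (by positivity) (hc0.trans_le (hgap x).1) (hgap x).2
  have hup : ∀ x, 2 * a / (mu0 x - lam0 x) ≤ 2 * a / c0 := fun x =>
    div_le_div_of_nonneg_left (by positivity) hc0 (hgap x).1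
  have hg : LocallyIntegrable (fun x => 2 * a / (mu0 x - lam0 x)) :=
    locallyIntegrable_of_isBounded_range (measurable_const.div (hmm.sub hlm)).aestronglyMeasurable
      ((Metric.isBounded_Icc _ _).subset (range_subset_iff.2 fun x => ⟨hlow x, hup x⟩))
  exact ⟨hg, hasSlopeBounds_primitive hg hlow hup⟩

theorem lagrangian_identities_of_density {a : ℝ} (ha : a ≠ 0) {lam0 mu0 : ℝ → ℝ}
    (hlm : Measurable lam0) (hmm : Measurable mu0) (hl : IsBounded (range lam0))
    (hm : IsBounded (range mu0)) {g : ℝ → ℝ} (hg : LocallyIntegrable g) (hg0 : ∀ x, 0 ≤ g x)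
    (hmono : StrictMono (primitive g)) (hsurj : Function.Surjective (primitive g))
    (hgap : ∀ x, g x * (mu0 x - lam0 x) = 2 * a) {X0 : ℝ → ℝ}
    (hX0 : Function.LeftInverse X0 (primitive g)) {lbar mbar Hbar Ibar : ℝ}
    {X : ℝ → ℝ → ℝ} {H I ω : ℝ → ℝ}
    (hX : ∀ t z, X t z = (1 / (2 * a)) * (∫ ξ in (0:ℝ)..(z + a * t), mu0 (X0 ξ))
        - (1 / (2 * a)) * (∫ ξ in (0:ℝ)..(z - a * t), lam0 (X0 ξ)))
    (hH : ∀ y, H y = ∫ ξ in (1:ℝ)..y, (lam0 (X0 ξ) - lbar))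
    (hI : ∀ y, I y = ∫ ξ in (1:ℝ)..y, (mu0 (X0 ξ) - mbar))
    (hω : ∀ x, ω x =
      x + (1 / (2 * a)) * ((H (primitive g x) - Hbar) - (I (primitive g x) - Ibar))) :
    (∀ x, ω x =
      (mbar - lbar) / (2 * a) * primitive g x + (H 0 - I 0 + Ibar - Hbar) / (2 * a)) ∧
    ∀ t x, X t (primitive g x) - ((lbar + mbar) / 2) * t = ω x + (1 / (2 * a)) *
      ((I (primitive g x + a * t) - Ibar) - (H (primitive g x - a * t) - Hbar)) := by
  have hX0m : Measurable X0 := (monotone_of_leftInverse hmono hsurj hX0).measurable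
  have hlX : LocallyIntegrable fun ξ => lam0 (X0 ξ) := locallyIntegrable_of_isBounded_range
    (hlm.comp hX0m).aestronglyMeasurable (hl.subset (range_comp_subset_range _ _))
  have hmX : LocallyIntegrable fun ξ => mu0 (X0 ξ) := locallyIntegrable_of_isBounded_range
    (hmm.comp hX0m).aestronglyMeasurable (hm.subset (range_comp_subset_range _ _))
  have hΛ : ∀ z, ∫ ξ in (0:ℝ)..z, lam0 (X0 ξ) = H z - H 0 + lbar * z := fun z => by
    rw [hH, hH]; exact integral_eq_integral_sub_const_add hlX lbar 1 z
  have hM : ∀ z, ∫ ξ in (0:ℝ)..z, mu0 (X0 ξ) = I z - I 0 + mbar * z := fun z => by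
    rw [hI, hI]; exact integral_eq_integral_sub_const_add hmX mbar 1 z
  refine lagrangian_identities ha hΛ hM (fun x => ?_) hX hω
  rw [← intervalIntegral.integral_sub (hmX.intervalIntegrable _ _) (hlX.intervalIntegrable _ _),
    ← primitive_zero (g := g), integral_comp_leftInverse_primitive hg hg0 hmono hsurj hX0
      (h := fun x => mu0 x - lam0 x) (hmm.sub hlm) 0 x]
  simp only [hgap, intervalIntegral.integral_const, sub_zero, smul_eq_mul, mul_comm]

theorem tendstoUniformlyOn_of_eq_add_shift_remainder {a Hbar Ibar : ℝ} (ha : 0 < a)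
    {H I : ℝ → ℝ} (hH : Tendsto H atBot (𝓝 Hbar)) (hI : Tendsto I atTop (𝓝 Ibar))
    {u ω : ℝ → ℝ} (hu : Continuous u) {F : ℝ → ℝ → ℝ}
    (hF : ∀ t x, F t x =
      ω x + (1 / (2 * a)) * ((I (u x + a * t) - Ibar) - (H (u x - a * t) - Hbar)))
    {s : Set ℝ} (hs : IsCompact s) : TendstoUniformlyOn F ω atTop s := by
  have hF' : F = fun t x =>
      ω x + (1 / (2 * a)) * ((I (u x + a * t) - Ibar) - (H (u x - a * t) - Hbar)) :=
    funext fun t => funext (hF t)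
  rw [hF']
  refine tendstoUniformlyOn_add_of_tendsto_zero ?_
  simpa using (tendsto_shift_remainder hH hI ha (hs.image hu).isBounded).const_mul (1 / (2 * a))

theorem stmt_18
    (a : ℝ) (ha : 0 < a)
    (lam0 mu0 : ℝ → ℝ) (hlm : Measurable lam0) (hmm : Measurable mu0)
    (hlbdd : BddAbove (Set.range lam0)) (hlbdd' : BddBelow (Set.range lam0))
    (hmbdd : BddAbove (Set.range mu0)) (hmbdd' : BddBelow (Set.range mu0))
    (hsep : sSup (Set.range lam0) < sInf (Set.range mu0))
    (lbar mbar : ℝ)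
    (hllim : Tendsto lam0 atBot (nhds lbar))
    (hmlim : Tendsto mu0 atTop (nhds mbar))
    (Z0 X0 : ℝ → ℝ)
    (hZ0 : ∀ x, Z0 x = ∫ ξ in (0:ℝ)..x, 2 * a / (mu0 ξ - lam0 ξ))
    (hX0Z0 : ∀ x, X0 (Z0 x) = x)
    (X : ℝ → ℝ → ℝ)
    (hX : ∀ t z, X t z = (1 / (2 * a)) * (∫ ξ in (0:ℝ)..(z + a * t), mu0 (X0 ξ))
        - (1 / (2 * a)) * (∫ ξ in (0:ℝ)..(z - a * t), lam0 (X0 ξ)))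
    (H I : ℝ → ℝ)
    (hH : ∀ y, H y = ∫ ξ in (1:ℝ)..y, (lam0 (X0 ξ) - lbar))
    (hI : ∀ y, I y = ∫ ξ in (1:ℝ)..y, (mu0 (X0 ξ) - mbar))
    (Hbar Ibar : ℝ)
    (hHbar : Tendsto H atBot (nhds Hbar))
    (hIbar : Tendsto I atTop (nhds Ibar))
    (ω : ℝ → ℝ)
    (hω : ∀ x, ω x = x + (1 / (2 * a)) * ((H (Z0 x) - Hbar) - (I (Z0 x) - Ibar))) :
    (∃ L : NNReal, LipschitzWith L ω) ∧ StrictMono ω ∧ Function.Bijective ω ∧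
    (∀ᵐ x : ℝ, HasDerivAt ω ((mbar - lbar) / (mu0 x - lam0 x)) x) ∧
    (∃ γ > (0:ℝ), ∀ x : ℝ, γ ≤ (mbar - lbar) / (mu0 x - lam0 x)) ∧
    (∀ x : ℝ, Tendsto (fun t => X t (Z0 x) - ((lbar + mbar) / 2) * t)
        atTop (nhds (ω x))) ∧
    (∀ s : Set ℝ, IsCompact s → TendstoUniformlyOn
        (fun t x => X t (Z0 x) - ((lbar + mbar) / 2) * t) ω atTop s) ∧
    (∃ L : NNReal, LipschitzWith L (Function.invFun ω)) ∧
    StrictMono (Function.invFun ω) ∧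
    (∀ x : ℝ, Tendsto
        (fun t => Function.invFun ω (X t (Z0 x) - ((lbar + mbar) / 2) * t))
        atTop (nhds x)) ∧
    (∀ s : Set ℝ, IsCompact s → TendstoUniformlyOn
        (fun t x => Function.invFun ω (X t (Z0 x) - ((lbar + mbar) / 2) * t))
        id atTop s) := by
  obtain ⟨c0, C0, hc0, hgap, hbar⟩ :=
    exists_gap_bounds hlbdd' hlbdd hmbdd' hmbdd hsep hllim hmlim
  have hgap_pos : ∀ x, 0 < mu0 x - lam0 x := fun x => hc0.trans_le (hgap x).1
  have hC0 : 0 < C0 := (hgap_pos 0).trans_le (hgap 0).2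
  obtain ⟨hg, hZ⟩ := locallyIntegrable_and_hasSlopeBounds_primitive_of_gap ha hlm hmm hc0 hgap
  obtain rfl : Z0 = primitive _ := funext hZ0
  obtain ⟨hωZ, hXω⟩ := lagrangian_identities_of_density ha.ne' hlm hmm
    (isBounded_iff_bddBelow_bddAbove.2 ⟨hlbdd', hlbdd⟩)
    (isBounded_iff_bddBelow_bddAbove.2 ⟨hmbdd', hmbdd⟩) hg
    (fun x => (div_pos (by positivity) (hgap_pos x)).le) (hZ.strictMono (by positivity))
    (hZ.surjective (by positivity)) (fun x => div_mul_cancel₀ _ (hgap_pos x).ne')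
    hX0Z0 hX hH hI hω
  have hc : 0 < (mbar - lbar) / (2 * a) := div_pos (hc0.trans_le hbar) (by positivity)
  have hωeq : ω = _ := funext hωZ
  have hω : HasSlopeBounds ω _ _ := hωeq ▸ hZ.const_mul_add hc.le _
  have hωmono := hω.strictMono (by positivity)
  have hωsurj := hω.surjective (by positivity)
  have hθ := hω.lipschitzWith_invFun (by positivity)
  have hunif := fun s (hs : IsCompact s) => tendstoUniformlyOn_of_eq_add_shift_remainder ha
    hHbar hIbar (continuous_primitive hg) hXω hs
  have hθunif := fun s (hs : IsCompact s) => (hunif s hs).comp_leftInverse hθ.uniformContinuous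
    (Function.leftInverse_invFun hωmono.injective)
  refine ⟨⟨_, hω.lipschitzWith (by positivity)⟩, hωmono, ⟨hωmono.injective, hωsurj⟩, ?_,
    ⟨c0 / C0, div_pos hc0 hC0, fun x =>
      div_le_div₀ (hc0.le.trans hbar) hbar (hgap_pos x) (hgap x).2⟩,
    fun x => (hunif _ isCompact_singleton).tendsto_at rfl, hunif, ⟨_, hθ⟩,
    strictMono_invFun hωmono hωsurj, fun x => (hθunif _ isCompact_singleton).tendsto_at rfl,
    hθunif⟩
  filter_upwards [ae_hasDerivAt_primitive hg] with x hx
  rw [hωeq, show (mbar - lbar) / (mu0 x - lam0 x) =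
    (mbar - lbar) / (2 * a) * (2 * a / (mu0 x - lam0 x)) by field_simp]
  exact (hx.const_mul _).add_const _
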